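/- If φ is an even function (φ(−x) = φ(x) for all x) in addition to being 1-periodic, then a₁ = a₀/2, where a₀ = (∫₀¹ e^{−φ(x)} dx)·(∫₀¹ e^{φ(s)} ds) and a₁ = ∫₀¹∫₀¹ exp(φ(x+s) − φ(x))·s ds dx. -/
import Mathlib


open MeasureTheory intervalIntegral

lemma my_swap (F : ℝ → ℝ → ℝ) (hF : Continuous (Function.uncurry F)) :
    ∫ x in (0:ℝ)..1, ∫ s in (0:ℝ)..1, F x s = ∫ s in (0:ℝ)..1, ∫ x in (0:ℝ)..1, F x s := by
  have h01 : (0:ℝ) ≤ 1 := zero_le_one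
  rw [intervalIntegral.integral_of_le h01]
  rw [intervalIntegral.integral_of_le h01]
  simp_rw [intervalIntegral.integral_of_le h01]
  rw [MeasureTheory.integral_integral_swap]
  rw [Measure.prod_restrict]
  apply (MeasureTheory.IntegrableOn.mono_set _
    (Set.prod_mono Set.Ioc_subset_Icc_self Set.Ioc_subset_Icc_self))
  rw [← MeasureTheory.Measure.volume_eq_prod]
  exact (hF.continuousOn).integrableOn_compact (isCompact_Icc.prod isCompact_Icc)

/-- If `φ` is even (in addition to being continuous and 1-periodic),
then `a₁ = a₀/2`. -/
theorem stmt_12 (φ : ℝ → ℝ) (hφc : Continuous φ) (hφper : ∀ x, φ (x + 1) = φ x)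
    (hφeven : ∀ x, φ (-x) = φ x)
    (a0 a1 : ℝ)
    (ha0 : a0 = (∫ x in (0:ℝ)..1, Real.exp (-φ x)) * ∫ s in (0:ℝ)..1, Real.exp (φ s))
    (ha1 : a1 = ∫ x in (0:ℝ)..1, ∫ s in (0:ℝ)..1, Real.exp (φ (x + s) - φ x) * s) :
    a1 = a0 / 2 := by
  set g : ℝ → ℝ := fun s => ∫ x in (0:ℝ)..1, Real.exp (φ (x + s) - φ x) with hg
  have hcont2 : Continuous (Function.uncurry fun x s : ℝ => Real.exp (φ (x + s) - φ x)) := by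
    apply Real.continuous_exp.comp
    fun_prop
  have hcont2' : Continuous (Function.uncurry fun s x : ℝ => Real.exp (φ (x + s) - φ x)) := by
    apply Real.continuous_exp.comp
    fun_prop
  have hgcont : Continuous g :=
    intervalIntegral.continuous_parametric_intervalIntegral_of_continuous'
      (f := fun s x : ℝ => Real.exp (φ (x + s) - φ x)) (μ := volume) hcont2' 0 1
  -- Lemma A : the "reversed" integral equals g s
  have lemA : ∀ s : ℝ, (∫ x in (0:ℝ)..1, Real.exp (φ x - φ (x + s))) = g s := by
    intro s
    have hper : Function.Periodic (fun u => Real.exp (φ (u + s) - φ u)) 1 := by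
      intro u
      simp only [add_right_comm u 1 s, hφper]
    have h1 : (∫ x in (0:ℝ)..1, Real.exp (φ x - φ (x + s)))
        = ∫ x in (0:ℝ)..1, Real.exp (φ (-(x + s) + s) - φ (-(x + s))) := by
      refine intervalIntegral.integral_congr fun x _ => ?_
      rw [show -(x + s) + s = -x by ring, hφeven x, hφeven (x + s)]
    have c1 := intervalIntegral.integral_comp_add_right (a := (0:ℝ)) (b := 1)
      (fun y => Real.exp (φ (-y + s) - φ (-y))) s
    simp only [neg_add_rev] at c1 ⊢
    have c2 := intervalIntegral.integral_comp_neg (a := (0:ℝ) + s) (b := 1 + s)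
      (fun u => Real.exp (φ (u + s) - φ u))
    have c3 : (∫ x in -(1 + s)..(-((0:ℝ) + s)), Real.exp (φ (x + s) - φ x)) = g s := by
      rw [show (-((0:ℝ) + s)) = -(1 + s) + 1 by ring,
        hper.intervalIntegral_add_eq (-(1 + s)) 0, hg]
      norm_num
    rw [h1]
    calc (∫ x in (0:ℝ)..1, Real.exp (φ (-(x + s) + s) - φ (-(x + s))))
        = ∫ x in (0:ℝ) + s..1 + s, Real.exp (φ (-x + s) - φ (-x)) := by
          rw [← c1]
          refine intervalIntegral.integral_congr fun x _ => ?_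
          rw [show -(x + s) = -s + -x by ring]
      _ = ∫ x in -(1 + s)..(-((0:ℝ) + s)), Real.exp (φ (x + s) - φ x) := c2
      _ = g s := c3
  -- Lemma B : symmetry of g
  have lemB : ∀ s : ℝ, g (1 - s) = g s := by
    intro s
    have hperG : Function.Periodic (fun u => Real.exp (φ u - φ (u + s))) 1 := by
      intro u
      simp only [add_right_comm u 1 s, hφper]
    have c1 := intervalIntegral.integral_comp_add_right (a := (0:ℝ)) (b := 1)
      (fun u => Real.exp (φ u - φ (u + s))) (-s)
    have h1 : g (1 - s) = ∫ x in (0:ℝ)..1, Real.exp (φ (x + -s) - φ (x + -s + s)) := by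
      rw [hg]
      refine intervalIntegral.integral_congr fun x _ => ?_
      rw [show x + (1 - s) = (x + -s) + 1 by ring, hφper, show x + -s + s = x by ring]
    rw [h1, c1, show (0:ℝ) + -s = 0 + -s by ring,
      show (1:ℝ) + -s = (0 + -s) + 1 by ring,
      hperG.intervalIntegral_add_eq (0 + -s) 0]
    have := lemA s
    simpa using this
  -- a1 = ∫ s, g s * s
  have ha1' : a1 = ∫ s in (0:ℝ)..1, g s * s := by
    rw [ha1, my_swap _ (by fun_prop : Continuous
      (Function.uncurry fun x s : ℝ => Real.exp (φ (x + s) - φ x) * s))]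
    refine intervalIntegral.integral_congr fun s _ => ?_
    exact intervalIntegral.integral_mul_const s _
  -- ∫ g = a0
  have hInt : (∫ s in (0:ℝ)..1, g s) = a0 := by
    have hswap := my_swap (fun x s : ℝ => Real.exp (φ (x + s) - φ x)) hcont2
    have hgeq : (∫ s in (0:ℝ)..1, g s)
        = ∫ x in (0:ℝ)..1, ∫ s in (0:ℝ)..1, Real.exp (φ (x + s) - φ x) := hswap.symm
    rw [hgeq, ha0]
    have hperE : Function.Periodic (fun u => Real.exp (φ u)) 1 := fun u => by simp [hφper]
    have inner : ∀ x : ℝ, (∫ s in (0:ℝ)..1, Real.exp (φ (x + s) - φ x))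
        = Real.exp (-φ x) * ∫ s in (0:ℝ)..1, Real.exp (φ s) := by
      intro x
      have c1 := intervalIntegral.integral_comp_add_right (a := (0:ℝ)) (b := 1)
        (fun u => Real.exp (φ u)) x
      calc (∫ s in (0:ℝ)..1, Real.exp (φ (x + s) - φ x))
          = ∫ s in (0:ℝ)..1, Real.exp (-φ x) * Real.exp (φ (s + x)) := by
            refine intervalIntegral.integral_congr fun s _ => ?_
            rw [← Real.exp_add, add_comm s x]
            ring_nf
        _ = Real.exp (-φ x) * ∫ s in (0:ℝ)..1, Real.exp (φ (s + x)) :=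
            intervalIntegral.integral_const_mul _ _
        _ = Real.exp (-φ x) * ∫ s in (0:ℝ)..1, Real.exp (φ s) := by
            rw [c1, show (0:ℝ) + x = 0 + x by ring, show (1:ℝ) + x = (0 + x) + 1 by ring,
              hperE.intervalIntegral_add_eq (0 + x) 0]
            norm_num
    rw [intervalIntegral.integral_congr fun x _ => inner x,
      intervalIntegral.integral_mul_const]
  -- symmetry trick : ∫ g s * s = (∫ g)/2
  have e1 : (∫ s in (0:ℝ)..1, g s * (1 - s)) = ∫ s in (0:ℝ)..1, g s * s := by
    have h := intervalIntegral.integral_comp_sub_left (a := (0:ℝ)) (b := 1)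
      (fun s => g s * s) 1
    simp only [sub_self, sub_zero] at h
    rw [← h]
    refine intervalIntegral.integral_congr fun s _ => ?_
    simp [lemB s]
  have hi1 : IntervalIntegrable (fun s => g s * (1 - s)) volume 0 1 :=
    (hgcont.mul (by fun_prop)).intervalIntegrable 0 1
  have hi2 : IntervalIntegrable (fun s => g s * s) volume 0 1 :=
    (hgcont.mul continuous_id).intervalIntegrable 0 1
  have e2 : (∫ s in (0:ℝ)..1, g s) =
      (∫ s in (0:ℝ)..1, g s * (1 - s)) + ∫ s in (0:ℝ)..1, g s * s := by
    rw [← intervalIntegral.integral_add hi1 hi2]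
    refine intervalIntegral.integral_congr fun s _ => ?_
    ring
  rw [ha1']
  rw [e2, e1] at hInt
  linarith
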